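/- arXiv:2205.14553 — 3 statements merged into one kernel-verified Lean document; each statement's English description precedes it below -/
import Mathlib

section
/- Let p ∈ R_+^N be a probability vector, i.e. ∑_{i=0}^{N-1} p_i = 1. Then for every λ ≥ 0 and every t ∈ N, H_t(p) ≤ (1 - ∑_{i=0}^{N-1} min{p_i, λ}) + λN/(t+1). -/
/-!
Split each mass as `p = (p - min p λ) + min p λ`. Since every weight `(i / N) ^ t` lies in
`[0, 1]`, the excess parts contribute at most `1 - ∑ min pᵢ λ` whatever the permutation, while the
truncated parts contribute at most `λ ∑ (i / N) ^ t`, and comparing this Riemann sum with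
`∫₀¹ x ^ t dx` bounds it by `λ N / (t + 1)`.
-/

open Finset

/-- The `t`-th permuted moment of a vector `u ∈ ℝ^N`. -/
noncomputable def pmom (N t : ℕ) (u : Fin N → ℝ) : ℝ :=
  Finset.univ.sup' ⟨1, Finset.mem_univ 1⟩
    (fun σ : Equiv.Perm (Fin N) => ∑ i : Fin N, ((i : ℝ) / N) ^ t * u (σ i))

theorem sum_range_pow_le_div (N t : ℕ) :
    ∑ i ∈ range N, (i : ℝ) ^ t ≤ (N : ℝ) ^ (t + 1) / (t + 1) := by
  have hmono : MonotoneOn (fun x : ℝ => x ^ t) (Set.Icc 0 (0 + N)) := fun x hx y _ hxy =>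
    pow_le_pow_left₀ hx.1 hxy t
  simpa [integral_pow] using hmono.sum_le_integral

theorem sum_fin_div_pow_le (N t : ℕ) :
    ∑ i : Fin N, ((i : ℝ) / N) ^ t ≤ N / (t + 1) := by
  rcases N.eq_zero_or_pos with rfl | hN
  · simp
  have hN' : (0 : ℝ) < N := by exact_mod_cast hN
  calc ∑ i : Fin N, ((i : ℝ) / N) ^ t
      = (∑ i ∈ range N, (i : ℝ) ^ t) / (N : ℝ) ^ t := by
        rw [Fin.sum_univ_eq_sum_range (fun i : ℕ => ((i : ℝ) / N) ^ t), sum_div]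
        simp only [div_pow]
    _ ≤ (N : ℝ) ^ (t + 1) / (t + 1) / (N : ℝ) ^ t := by
        gcongr
        exact sum_range_pow_le_div N t
    _ = N / (t + 1) := by
        field_simp
        ring

theorem fin_div_pow_mem_Icc (N t : ℕ) (i : Fin N) : ((i : ℝ) / N) ^ t ∈ Set.Icc 0 1 := by
  have hi : (i : ℝ) / N ∈ Set.Icc 0 1 :=
    ⟨by positivity, div_le_one_of_le₀ (by exact_mod_cast i.2.le) (by positivity)⟩
  exact ⟨pow_nonneg hi.1 t, pow_le_one₀ hi.1 hi.2⟩

section OrderedRing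

variable {R : Type*} [CommRing R] [LinearOrder R] [IsOrderedRing R]

theorem mul_le_sub_min_add_mul_min {w x c : R} (hw : w ∈ Set.Icc 0 1) :
    w * x ≤ (x - min x c) + w * min x c := by
  calc w * x = w * (x - min x c) + w * min x c := by ring
    _ ≤ (x - min x c) + w * min x c :=
        add_le_add_left (mul_le_of_le_one_left (sub_nonneg.2 (min_le_left x c)) hw.2) _

theorem sum_mul_le_sum_sub_sum_min_add {ι : Type*} (s : Finset ι) {w u : ι → R}
    (hw : ∀ i ∈ s, w i ∈ Set.Icc 0 1) (c : R) :
    ∑ i ∈ s, w i * u i ≤ ∑ i ∈ s, u i - ∑ i ∈ s, min (u i) c + c * ∑ i ∈ s, w i := by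
  calc ∑ i ∈ s, w i * u i ≤ ∑ i ∈ s, ((u i - min (u i) c) + w i * min (u i) c) :=
        sum_le_sum fun i hi => mul_le_sub_min_add_mul_min (hw i hi)
    _ ≤ ∑ i ∈ s, ((u i - min (u i) c) + w i * c) :=
        sum_le_sum fun i hi => by gcongr; exacts [(hw i hi).1, min_le_right _ _]
    _ = ∑ i ∈ s, u i - ∑ i ∈ s, min (u i) c + c * ∑ i ∈ s, w i := by
        rw [sum_add_distrib, sum_sub_distrib, mul_sum]
        simp only [mul_comm]

end OrderedRing

theorem pmom_prob_bound_general (N t : ℕ) (p : Fin N → ℝ)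
    (hsum : ∑ i : Fin N, p i = 1)
    (lam : ℝ) (hlam : 0 ≤ lam) :
    pmom N t p ≤ (1 - ∑ i : Fin N, min (p i) lam) + lam * N / (t + 1) := by
  refine sup'_le _ _ fun σ _ => ?_
  have hsplit := sum_mul_le_sum_sub_sum_min_add univ (u := fun i => p (σ i))
    (fun i _ => fin_div_pow_mem_Icc N t i) lam
  have hmoment : lam * ∑ i : Fin N, ((i : ℝ) / N) ^ t ≤ lam * (N / (t + 1)) :=
    mul_le_mul_of_nonneg_left (sum_fin_div_pow_le N t) hlam
  rw [Equiv.sum_comp σ p, Equiv.sum_comp σ (fun i => min (p i) lam), hsum] at hsplit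
  rw [mul_div_assoc]
  linarith

/-- Truncation bound for the permuted moment of a probability vector. -/
theorem pmom_prob_bound (N t : ℕ) (p : Fin N → ℝ)
    (hp : ∀ i, 0 ≤ p i) (hsum : ∑ i : Fin N, p i = 1)
    (lam : ℝ) (hlam : 0 ≤ lam) :
    pmom N t p ≤ (1 - ∑ i : Fin N, min (p i) lam) + lam * N / (t + 1) :=
  pmom_prob_bound_general N t p hsum lam hlam
end

section
/- Let G be a graph on the vertex set V = {1,...,n_w} with exactly m edges, where m ≤ L. Define ζ(x,y) for sentences x,y ∈ V^L as the graph whose edge set is {{x_ℓ, y_ℓ} : 1 ≤ ℓ ≤ L, x_ℓ ≠ y_ℓ}. Then the number of pairs (x,y) ∈ V^L × V^L with ζ(x,y) = G equals m! · ∑_{α=m}^{L} C(L,α) · S(α,m) · 2^α · n_w^{L-α}, where C(L,α) is a binomial coefficient and S(α,m) is a Stirling number of the second kind. -/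
/-!
Group the pairs `(x, y)` by the set `A` of positions where `x ℓ ≠ y ℓ`. Off `A` the two
sentences agree, which leaves `n_w` choices per position. On `A` the map `ℓ ↦ (x ℓ, y ℓ)`
hits each edge of `G` and nothing else: it is a surjection `A → G` (there are
`m! S(|A|, m)` of them) together with an orientation of the edge at every position (`2^|A|`).
Summing over `A` by size gives the binomial coefficients, and `S(α, m) = 0` for `α < m`
cuts the sum down to `α ≥ m`.
-/

/-- Stirling numbers of the second kind. -/
def stirling2 : ℕ → ℕ → ℕ
  | 0, 0 => 1
  | 0, _ + 1 => 0
  | _ + 1, 0 => 0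
  | n + 1, k + 1 => stirling2 n k + (k + 1) * stirling2 n (k + 1)

/-- The graph (edge set) induced by a pair of sentences. -/
def zeta (nw L : ℕ) (x y : Fin L → Fin nw) : Finset (Sym2 (Fin nw)) :=
  (Finset.univ.filter (fun ℓ => x ℓ ≠ y ℓ)).image (fun ℓ => s(x ℓ, y ℓ))

open Finset Nat

theorem stirling2_eq_stirlingSecond : ∀ n k, stirling2 n k = stirlingSecond n k
  | 0, 0 | 0, _ + 1 | _ + 1, 0 => rfl
  | n + 1, k + 1 => by
    rw [stirling2, stirlingSecond_succ_succ, stirling2_eq_stirlingSecond n k,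
      stirling2_eq_stirlingSecond n (k + 1), add_comm]

theorem Finset.insert_eq_iff {α : Type*} [DecidableEq α] {a : α} {s t : Finset α} :
    insert a s = t ↔ a ∈ t ∧ (s = t ∨ s = t.erase a) := by
  constructor
  · rintro rfl
    refine ⟨mem_insert_self a s, ?_⟩
    by_cases ha : a ∈ s
    · exact .inl (insert_eq_of_mem ha).symm
    · exact .inr (erase_insert ha).symm
  · rintro ⟨ha, rfl | rfl⟩
    · exact insert_eq_of_mem ha
    · exact insert_erase ha

theorem Finset.image_univ_option {α β : Type*} [Fintype α] [DecidableEq β]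
    (g : Option α → β) : univ.image g = insert (g none) (univ.image (g ∘ some)) := by
  rw [← coe_inj]
  simp only [coe_image, coe_insert, coe_univ, Set.image_univ]
  exact Option.range_eq g

theorem Finset.image_univ_subtype {α β : Type*} [DecidableEq β] (s : Finset α) (f : α → β) :
    univ.image (fun a : s => f a) = s.image f := by
  ext
  simp

section SurjectionCount
variable {α : Type*} [Fintype α] [DecidableEq α]

-- `g none` is either a point of `S` that `g ∘ some` also hits, or the one point it misses.
theorem card_filter_image_option_eq {ι : Type*} [Fintype ι] [DecidableEq ι] (S : Finset α) :
    #{g : Option ι → α | univ.image g = S} =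
      ∑ a ∈ S, (#{h : ι → α | univ.image h = S} +
        #{h : ι → α | univ.image h = S.erase a}) := by
  calc #{g : Option ι → α | univ.image g = S}
      = #{p : α × (ι → α) | insert p.1 (univ.image p.2) = S} :=
        card_equiv Equiv.piOptionEquivProd fun g => by
          simp [image_univ_option, Function.comp_def]
    _ = ∑ a, #{h : ι → α | insert a (univ.image h) = S} := by
        simp only [card_filter, Fintype.sum_prod_type]
    _ = ∑ a ∈ S, #{h : ι → α | insert a (univ.image h) = S} :=
        (sum_subset (subset_univ S) fun a _ ha => by simp [insert_eq_iff, ha]).symm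
    _ = _ := sum_congr rfl fun a ha => by
        simp only [insert_eq_iff, ha, true_and]
        rw [filter_or, card_union_of_disjoint]
        exact disjoint_filter.2 fun h _ h1 h2 => notMem_erase a S (h2 ▸ h1 ▸ ha)

theorem card_filter_image_univ_eq (ι : Type*) [Fintype ι] [DecidableEq ι] (S : Finset α) :
    #{g : ι → α | univ.image g = S} = (#S)! * stirlingSecond (Fintype.card ι) #S := by
  revert S
  refine Finite.induction_empty_option
    (P := fun ι => ∀ [Fintype ι] [DecidableEq ι] (S : Finset α),
      #{g : ι → α | univ.image g = S} = (#S)! * stirlingSecond (Fintype.card ι) #S) ?_ ?_ ?_ ι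
  · intro ι κ e ih _ _ S
    let := Fintype.ofEquiv κ e.symm
    let := e.decidableEq
    rw [← Fintype.card_congr e, ← ih S]
    refine card_equiv (e.symm.arrowCongr (Equiv.refl α)) fun g => ?_
    simp only [mem_filter, mem_univ, true_and, ← coe_inj, coe_image, coe_univ, Set.image_univ]
    change _ ↔ Set.range (g ∘ e) = _
    rw [EquivLike.range_comp]
  · intro _ _ S
    rcases S.eq_empty_or_nonempty with rfl | hS
    · simp
    · simp [hS.ne_empty.symm, stirlingSecond_eq_zero_of_lt hS.card_pos]
  · intro ι _ ih _ _ S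
    classical
    convert card_filter_image_option_eq S using 1
    · congr!
    rw [Fintype.card_eq_nat_card, Finite.card_option, Nat.card_eq_fintype_card]
    rcases (#S).eq_zero_or_pos with hS | hS
    · simp [card_eq_zero.1 hS]
    · obtain ⟨k, hk⟩ := Nat.exists_eq_add_one_of_ne_zero hS.ne'
      rw [sum_congr rfl fun a ha => by rw [ih, ih, card_erase_of_mem ha], sum_const,
        smul_eq_mul, hk, Nat.add_sub_cancel, stirlingSecond_succ_succ, factorial_succ]
      ring

end SurjectionCount

theorem card_filter_image_comp_eq {ι β α : Type*} [Fintype ι] [DecidableEq ι] [Fintype β]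
    [Fintype α] [DecidableEq α] (π : β → α) (S : Finset α) {c : ℕ}
    (hπ : ∀ a ∈ S, #{b | π b = a} = c) :
    #{f : ι → β | univ.image (π ∘ f) = S} =
      #{g : ι → α | univ.image g = S} * c ^ Fintype.card ι := by
  rw [card_eq_sum_card_fiberwise (f := (π ∘ ·)) (t := {g : ι → α | univ.image g = S})
    (fun f hf => by simpa using hf), ← smul_eq_mul, ← sum_const]
  refine sum_congr rfl fun g hg => ?_
  have hgS : ∀ i, g i ∈ S := fun i => (mem_filter.1 hg).2 ▸ mem_image_of_mem g (mem_univ i)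
  calc #{f ∈ {f : ι → β | univ.image (π ∘ f) = S} | π ∘ f = g}
      = #(Fintype.piFinset fun i => {b | π b = g i}) := by
        congr 1
        ext f
        simp only [mem_filter, mem_univ, true_and, Fintype.mem_piFinset, funext_iff,
          Function.comp_apply]
        exact ⟨fun h => h.2,
          fun h => ⟨(funext h : π ∘ f = g) ▸ (mem_filter.1 hg).2, h⟩⟩
    _ = c ^ Fintype.card ι := by
        rw [Fintype.card_piFinset, prod_congr rfl fun i _ => hπ (g i) (hgS i), prod_const,
          Finset.card_univ]

theorem Sym2.card_filter_mk_eq {V : Type*} [Fintype V] [DecidableEq V] {e : Sym2 V}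
    (he : ¬ e.IsDiag) : #{p : V × V | s(p.1, p.2) = e} = 2 := by
  induction e using Sym2.ind with | h u v => ?_
  have huv : u ≠ v := by simpa using he
  have : ({p : V × V | s(p.1, p.2) = s(u, v)} : Finset (V × V)) = {(u, v), (v, u)} := by
    ext ⟨a, b⟩
    simp
  rw [this, card_pair (by simp [huv])]

theorem card_filter_forall_fst_eq_snd {κ V : Type*} [Fintype κ] [DecidableEq κ] [Fintype V]
    [DecidableEq V] :
    #{w : κ → V × V | ∀ j, (w j).1 = (w j).2} = Fintype.card V ^ Fintype.card κ := by
  have : ({w : κ → V × V | ∀ j, (w j).1 = (w j).2} : Finset _) =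
      Fintype.piFinset fun _ => (univ : Finset V).diag := by
    ext w
    simp
  rw [this, Fintype.card_piFinset, prod_const, diag_card, Finset.card_univ, Finset.card_univ]

section PairEdges
variable {ι V : Type*} [Fintype ι] [DecidableEq V]

def offDiagIndices (z : ι → V × V) : Finset ι := {i | (z i).1 ≠ (z i).2}

-- `zeta nw L x y` is `pairEdges fun ℓ => (x ℓ, y ℓ)`.
def pairEdges (z : ι → V × V) : Finset (Sym2 V) :=
  (offDiagIndices z).image fun i => s((z i).1, (z i).2)

theorem pairEdges_eq_and_offDiagIndices_eq_iff {G : Finset (Sym2 V)}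
    (hG : ∀ e ∈ G, ¬ e.IsDiag) (A : Finset ι) (z : ι → V × V) :
    pairEdges z = G ∧ offDiagIndices z = A ↔
      univ.image (fun a : A => s((z a).1, (z a).2)) = G ∧
        ∀ i : {i // i ∉ A}, (z i).1 = (z i).2 := by
  rw [image_univ_subtype A fun i => s((z i).1, (z i).2)]
  constructor
  · rintro ⟨rfl, rfl⟩
    exact ⟨rfl, fun i => by simpa [offDiagIndices] using i.2⟩
  · rintro ⟨hG', hdiagA⟩
    have hA : offDiagIndices z = A := by
      ext i
      simp only [offDiagIndices, mem_filter, mem_univ, true_and]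
      refine ⟨fun hi => by_contra fun h => hi (hdiagA ⟨i, h⟩), fun hi => ?_⟩
      have := hG _ (hG' ▸ mem_image_of_mem _ hi)
      simpa using this
    exact ⟨by rw [pairEdges, hA, hG'], hA⟩

theorem card_filter_pairEdges_offDiagIndices_eq [DecidableEq ι] [Fintype V]
    {G : Finset (Sym2 V)} (hG : ∀ e ∈ G, ¬ e.IsDiag) (A : Finset ι) :
    #{z : ι → V × V | pairEdges z = G ∧ offDiagIndices z = A} =
      (#G)! * stirlingSecond #A #G * 2 ^ #A * Fintype.card V ^ (Fintype.card ι - #A) := by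
  rw [card_equiv (Equiv.piEquivPiSubtypeProd (· ∈ A) fun _ => V × V)
      (t := ({u : A → V × V | univ.image ((fun p : V × V => s(p.1, p.2)) ∘ u) = G} :
          Finset _) ×ˢ ({w : {i // i ∉ A} → V × V | ∀ j, (w j).1 = (w j).2} : Finset _))
      fun z => by
        simp only [mem_filter, mem_univ, true_and, mem_product, Equiv.piEquivPiSubtypeProd_apply]
        exact pairEdges_eq_and_offDiagIndices_eq_iff hG A z,
    card_product, card_filter_forall_fst_eq_snd,
    card_filter_image_comp_eq (fun p : V × V => s(p.1, p.2)) G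
      fun e he => Sym2.card_filter_mk_eq (hG e he),
    card_filter_image_univ_eq, Fintype.card_coe, Fintype.card_subtype_compl, Fintype.card_coe]

theorem card_filter_pairEdges_eq [DecidableEq ι] [Fintype V] {G : Finset (Sym2 V)}
    (hG : ∀ e ∈ G, ¬ e.IsDiag) :
    #{z : ι → V × V | pairEdges z = G} = (#G)! * ∑ j ∈ range (Fintype.card ι + 1),
      (Fintype.card ι).choose j * stirlingSecond j #G * 2 ^ j *
        Fintype.card V ^ (Fintype.card ι - j) := by
  rw [card_eq_sum_card_fiberwise (f := offDiagIndices) (t := univ.powerset)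
    fun _ _ => mem_powerset.2 (subset_univ _)]
  simp_rw [filter_filter, card_filter_pairEdges_offDiagIndices_eq hG]
  rw [sum_powerset_apply_card
      fun j => (#G)! * stirlingSecond j #G * 2 ^ j * Fintype.card V ^ (Fintype.card ι - j),
    Finset.card_univ, mul_sum]
  exact sum_congr rfl fun j _ => by rw [smul_eq_mul]; ring

end PairEdges

theorem card_zeta_preimage_general (nw L m : ℕ) (G : Finset (Sym2 (Fin nw)))
    (hdiag : ∀ e ∈ G, ¬ e.IsDiag) (hcard : G.card = m) :
    (Finset.univ.filter
        (fun xy : (Fin L → Fin nw) × (Fin L → Fin nw) => zeta nw L xy.1 xy.2 = G)).card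
      = Nat.factorial m * ∑ α ∈ Finset.Icc m L,
          Nat.choose L α * stirling2 α m * 2 ^ α * nw ^ (L - α) := by
  subst hcard
  have hzeta : #{xy : (Fin L → Fin nw) × (Fin L → Fin nw) | zeta nw L xy.1 xy.2 = G} =
      #{z : Fin L → Fin nw × Fin nw | pairEdges z = G} :=
    card_equiv (Equiv.arrowProdEquivProdArrow _ _ _).symm fun _ => by
      simp [zeta, pairEdges, offDiagIndices]
  rw [hzeta, card_filter_pairEdges_eq hdiag, Fintype.card_fin, Fintype.card_fin]
  simp only [stirling2_eq_stirlingSecond]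
  congr 1
  refine (sum_subset (fun j hj => mem_range_succ_iff.2 (mem_Icc.1 hj).2) fun j hj hjG => ?_).symm
  simp only [mem_range, mem_Icc] at hj hjG
  rw [stirlingSecond_eq_zero_of_lt (by omega), mul_zero, zero_mul, zero_mul]

/-- Number of pairs of sentences mapped by `ζ` to a given graph with `m ≤ L` edges. -/
theorem card_zeta_preimage (nw L m : ℕ) (G : Finset (Sym2 (Fin nw)))
    (hdiag : ∀ e ∈ G, ¬ e.IsDiag) (hcard : G.card = m) (hm : m ≤ L) :
    (Finset.univ.filter
        (fun xy : (Fin L → Fin nw) × (Fin L → Fin nw) => zeta nw L xy.1 xy.2 = G)).card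
      = Nat.factorial m * ∑ α ∈ Finset.Icc m L,
          Nat.choose L α * stirling2 α m * 2 ^ α * nw ^ (L - α) :=
  card_zeta_preimage_general nw L m G hdiag hcard
end

section
/- Let G be a graph on V = {1,...,n_w} with exactly k_i connected components of size i for each 1 ≤ i ≤ L+1. Let Φ be the set of maps φ : V → {1,...,n_c} with all fibers of size s_c = n_w/n_c. Then the number of φ ∈ Φ that do not sever any edge of G (i.e. φ(v) = φ(v') for every edge {v,v'} of G) equals ∑_{A ∈ A_k} ∏_{i=1}^{L+1} multinomial(k_i; A_{i,1},...,A_{i,n_c}), where A_k is the set of matrices A ∈ N^{(L+1)×n_c} with ∑_j A_{ij} = k_i for all i and ∑_i i·A_{ij} = s_c for all j. -/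
/-!
A map that severs no edge is constant on connected components, so it is the same as a colouring
`ψ` of the components. Record `ψ` by the matrix `A` whose entry `A i j` counts the components of
size `i + 1` coloured `j`: its rows sum to `k i`, and the colour class `j` has
`∑ i, (i + 1) * A i j` vertices, so the equipartition condition only depends on `A`. For a fixed
`A`, the colourings are chosen independently on each size class, and on the class of size `i + 1`
there are `multinomial (A i)` of them. This last count is orbit–stabiliser: the maps with given
fibre sizes form one orbit of the symmetric group, and the stabiliser of a map is the product of
the symmetric groups of its fibres.
-/

open Finset Equiv MulAction

section FiberCounting

variable {α β ι : Type*} [Fintype α] [DecidableEq β]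

theorem exists_card_fiber_eq [Fintype β] (m : β → ℕ) (hm : ∑ b, m b = Fintype.card α) :
    ∃ f : α → β, ∀ b, #{a | f a = b} = m b := by
  obtain ⟨e⟩ : Nonempty (α ≃ Σ b, Fin (m b)) := Fintype.card_eq.mp (by simp [hm])
  refine ⟨fun a => (e a).1, fun b => ?_⟩
  rw [← Fintype.card_subtype, ← Fintype.card_fin (m b)]
  exact Fintype.card_congr ((e.subtypeEquiv fun _ => Iff.rfl).trans (sigmaSubtype b))

theorem card_fiber_comp_perm (f : α → β) (σ : Perm α) (b : β) :
    #{a | f (σ a) = b} = #{a | f a = b} := by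
  simp only [← Fintype.card_subtype]
  exact Fintype.card_congr (σ.subtypeEquiv fun _ => Iff.rfl)

theorem exists_perm_comp_eq_of_card_fiber_eq {f g : α → β}
    (h : ∀ b, #{a | f a = b} = #{a | g a = b}) : ∃ σ : Perm α, g ∘ σ = f := by
  have e : ∀ b, {a // f a = b} ≃ {a // g a = b} := fun b =>
    Fintype.equivOfCardEq (by simpa only [Fintype.card_subtype] using h b)
  exact ⟨ofFiberEquiv e, funext (ofFiberEquiv_map e)⟩

theorem orbit_perm_domMulAct_eq (f : α → β) :
    orbit (Perm α)ᵈᵐᵃ f = {g | ∀ b, #{a | g a = b} = #{a | f a = b}} := by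
  ext g
  constructor
  · rintro ⟨σ, rfl⟩ b
    exact card_fiber_comp_perm f (DomMulAct.mk.symm σ) b
  · intro hg
    obtain ⟨σ, rfl⟩ := exists_perm_comp_eq_of_card_fiber_eq hg
    exact ⟨DomMulAct.mk σ, rfl⟩

theorem card_fiber_card_eq_multinomial [DecidableEq α] [Fintype β] (m : β → ℕ)
    (hm : ∑ b, m b = Fintype.card α) :
    #{f : α → β | ∀ b, #{a | f a = b} = m b} = Nat.multinomial univ m := by
  obtain ⟨f, hf⟩ := exists_card_fiber_eq m hm
  have horbit := Subgroup.card_mul_index (stabilizer (Perm α)ᵈᵐᵃ f)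
  have hstab : Nat.card (stabilizer (Perm α)ᵈᵐᵃ f) = ∏ b, (m b).factorial := by
    rw [Nat.card_congr (subtypeEquiv (p := fun g => g ∈ stabilizer (Perm α)ᵈᵐᵃ f)
        (q := fun g : Perm α => f ∘ g = f) DomMulAct.mk.symm fun _ => DomMulAct.mem_stabilizer_iff),
      Nat.card_eq_fintype_card, DomMulAct.stabilizer_card]
    simp only [Fintype.card_subtype, hf]
  rw [hstab, index_stabilizer, orbit_perm_domMulAct_eq, Nat.card_congr DomMulAct.mk.symm,
    Nat.card_perm, Nat.card_eq_fintype_card, ← hm, ← Nat.multinomial_spec] at horbit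
  simp only [hf] at horbit
  rw [← Nat.eq_of_mul_eq_mul_left (by positivity) horbit, ← Set.ncard_coe_finset, coe_filter]
  simp only [mem_univ, true_and]

variable [DecidableEq ι]

def fiberProfile (idx : α → ι) (ψ : α → β) (i : ι) (b : β) : ℕ :=
  #{a | idx a = i ∧ ψ a = b}

theorem fiberProfile_eq_card_subtype (idx : α → ι) (ψ : α → β) (i : ι) (b : β) :
    fiberProfile idx ψ i b = #{x : {a // idx a = i} | ψ x = b} := by
  simp only [fiberProfile, ← Fintype.card_subtype]
  exact Fintype.card_congr (subtypeSubtypeEquivSubtypeInter _ _).symm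

theorem sum_fiberProfile [Fintype β] (idx : α → ι) (ψ : α → β) (i : ι) :
    ∑ b, fiberProfile idx ψ i b = #{a | idx a = i} := by
  rw [card_eq_sum_card_fiberwise (f := ψ) (t := univ) (fun _ _ => mem_univ _)]
  simp only [fiberProfile, filter_filter]

theorem card_fiberProfile_eq_prod_multinomial [DecidableEq α] [Fintype β] [Fintype ι]
    (idx : α → ι) (A : ι → β → ℕ) (hA : ∀ i, ∑ b, A i b = #{a | idx a = i}) :
    #{ψ : α → β | fiberProfile idx ψ = A} = ∏ i, Nat.multinomial univ (A i) := by
  let restrict : (α → β) ≃ ∀ i, {a // idx a = i} → β :=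
    (arrowCongr (sigmaFiberEquiv idx).symm (Equiv.refl β)).trans (piCurry fun _ _ => β)
  rw [← Fintype.card_subtype,
    Fintype.card_congr ((restrict.subtypeEquiv fun ψ => ?_).trans (subtypePiEquivPi
      (p := fun i (g : {a // idx a = i} → β) => ∀ b, #{x | g x = b} = A i b))),
    Fintype.card_pi]
  · refine prod_congr rfl fun i _ => ?_
    rw [Fintype.card_subtype]
    exact card_fiber_card_eq_multinomial (A i) (by rw [hA, Fintype.card_subtype])
  · simp only [funext_iff, fiberProfile_eq_card_subtype]
    rfl

end FiberCounting

theorem Set.ncard_preimage_eq_finsum {X Y : Type*} [Finite X] (F : X → Y) (S : Set Y) :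
    (F ⁻¹' S).ncard = ∑ᶠ y ∈ S, (F ⁻¹' {y}).ncard := by
  have hsupp : S ∩ Function.support (fun y => (F ⁻¹' {y}).ncard)
      = (S ∩ range F) ∩ Function.support (fun y => (F ⁻¹' {y}).ncard) := by
    ext y
    simp only [mem_inter_iff, Function.mem_support, mem_range]
    refine ⟨fun ⟨hy, hne⟩ => ⟨⟨hy, ?_⟩, hne⟩, fun ⟨⟨hy, _⟩, hne⟩ => ⟨hy, hne⟩⟩
    exact nonempty_of_ncard_ne_zero hne
  rw [finsum_mem_inter_support_eq _ _ _ hsupp, ← ((finite_range F).inter_of_right S).ncard_biUnion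
    (fun _ _ => toFinite _) (pairwiseDisjoint_fiber F _)]
  congr 1
  ext x
  simp

namespace SimpleGraph

variable {V β : Type*} {G : SimpleGraph V}

theorem Walk.apply_eq_of_forall_adj {f : V → β} (hf : ∀ v w, G.Adj v w → f v = f w)
    {u v : V} (p : G.Walk u v) : f u = f v := by
  induction p with
  | nil => rfl
  | cons hadj _ ih => exact (hf _ _ hadj).trans ih

theorem ncard_setOf_and_forall_adj (P : (V → β) → Prop) :
    {φ : V → β | P φ ∧ ∀ v w, G.Adj v w → φ v = φ w}.ncard
      = {ψ : G.ConnectedComponent → β | P (ψ ∘ G.connectedComponentMk)}.ncard := by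
  have hinj : Function.Injective fun ψ : G.ConnectedComponent → β => ψ ∘ G.connectedComponentMk :=
    Quot.mk_surjective.injective_comp_right
  rw [← Set.ncard_image_of_injective _ hinj]
  congr 1
  ext φ
  constructor
  · rintro ⟨hP, hadj⟩
    exact ⟨ConnectedComponent.lift φ fun v w p _ => p.apply_eq_of_forall_adj hadj, hP, rfl⟩
  · rintro ⟨ψ, hP, rfl⟩
    exact ⟨hP, fun v w hvw => congrArg ψ (ConnectedComponent.connectedComponentMk_eq_of_adj hvw)⟩

variable [Fintype V] [DecidableEq V] [DecidableRel G.Adj] [DecidableEq β]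

theorem card_filter_comp_connectedComponentMk (ψ : G.ConnectedComponent → β) (b : β) :
    #{v | ψ (G.connectedComponentMk v) = b} = ∑ c with ψ c = b, c.supp.ncard := by
  classical
  rw [card_eq_sum_card_fiberwise (t := {c | ψ c = b}) (f := G.connectedComponentMk)
    (fun v hv => by simpa using hv)]
  refine sum_congr rfl fun c hc => ?_
  rw [ConnectedComponent.supp, ← Set.ncard_coe_finset, filter_filter]
  congr 1
  ext v
  simp only [coe_filter, mem_univ, true_and, Set.mem_ofPred_eq, and_iff_right_iff_imp]
  rintro rfl
  simpa using hc

theorem card_filter_comp_connectedComponentMk_eq_sum_mul_fiberProfile {ι : Type*} [Fintype ι]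
    [DecidableEq ι] (w : ι → ℕ) (idx : G.ConnectedComponent → ι)
    (hidx : ∀ c, c.supp.ncard = w (idx c)) (ψ : G.ConnectedComponent → β) (b : β) :
    #{v | ψ (G.connectedComponentMk v) = b} = ∑ i, w i * fiberProfile idx ψ i b := by
  calc _ = ∑ c with ψ c = b, w (idx c) := by
        simp only [card_filter_comp_connectedComponentMk, hidx]
    _ = ∑ i, ∑ c with ψ c = b ∧ idx c = i, w i := by
        simp only [← sum_fiberwise' _ idx w, filter_filter]
    _ = _ := by
        simp only [sum_const, smul_eq_mul, fiberProfile, and_comm, mul_comm]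

end SimpleGraph

theorem card_cutfree_equipartitions_general (nw nc s L : ℕ)
    (G : SimpleGraph (Fin nw)) (k : Fin (L + 1) → ℕ)
    (hk : ∀ i : Fin (L + 1),
      {c : G.ConnectedComponent | c.supp.ncard = (i : ℕ) + 1}.ncard = k i)
    (hcover : ∀ c : G.ConnectedComponent, c.supp.ncard ≤ L + 1) :
    {φ : Fin nw → Fin nc |
        (∀ c : Fin nc, (Finset.univ.filter (fun v => φ v = c)).card = s) ∧
        ∀ v v' : Fin nw, G.Adj v v' → φ v = φ v'}.ncard
      = ∑ᶠ A ∈ {A : Fin (L + 1) → Fin nc → ℕ |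
            (∀ i, ∑ j : Fin nc, A i j = k i) ∧
            (∀ j, ∑ i : Fin (L + 1), ((i : ℕ) + 1) * A i j = s)},
          ∏ i : Fin (L + 1), Nat.multinomial Finset.univ (A i) := by
  classical
  have hsize : ∀ c : G.ConnectedComponent, ∃ i : Fin (L + 1), c.supp.ncard = (i : ℕ) + 1 :=
    fun c => ⟨⟨c.supp.ncard - 1, by have := hcover c; omega⟩,
      (Nat.sub_add_cancel c.nonempty_supp.ncard_pos).symm⟩
  choose idx hidx using hsize
  have hclass : ∀ i, #{c | idx c = i} = k i := by
    intro i
    rw [← hk i, ← Set.ncard_coe_finset, coe_filter]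
    congr 1
    ext c
    simp only [mem_univ, true_and, Set.mem_ofPred_eq, hidx, Fin.ext_iff]
    omega
  have hcolour := G.card_filter_comp_connectedComponentMk_eq_sum_mul_fiberProfile (β := Fin nc)
    (fun i : Fin (L + 1) => (i : ℕ) + 1) idx hidx
  rw [SimpleGraph.ncard_setOf_and_forall_adj]
  calc _ = (fiberProfile idx ⁻¹' {A | (∀ i, ∑ j, A i j = k i) ∧
            ∀ j, ∑ i : Fin (L + 1), ((i : ℕ) + 1) * A i j = s}).ncard := by
        congr 1
        ext ψ
        simp [hcolour, sum_fiberProfile, hclass]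
    _ = _ := Set.ncard_preimage_eq_finsum _ _
    _ = _ := finsum_mem_congr rfl fun A hA => ?_
  rw [← card_fiberProfile_eq_prod_multinomial idx A (fun i => by rw [hA.1 i, hclass]),
    ← Set.ncard_coe_finset, coe_filter]
  simp only [mem_univ, true_and]
  rfl

/-- Counting the cut-free equipartitions of a graph with a prescribed
connected component profile. -/
theorem card_cutfree_equipartitions (nw nc s L : ℕ) (h : nw = nc * s)
    (G : SimpleGraph (Fin nw)) (k : Fin (L + 1) → ℕ)
    (hk : ∀ i : Fin (L + 1),
      {c : G.ConnectedComponent | c.supp.ncard = (i : ℕ) + 1}.ncard = k i)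
    (hcover : ∀ c : G.ConnectedComponent, c.supp.ncard ≤ L + 1) :
    {φ : Fin nw → Fin nc |
        (∀ c : Fin nc, (Finset.univ.filter (fun v => φ v = c)).card = s) ∧
        ∀ v v' : Fin nw, G.Adj v v' → φ v = φ v'}.ncard
      = ∑ᶠ A ∈ {A : Fin (L + 1) → Fin nc → ℕ |
            (∀ i, ∑ j : Fin nc, A i j = k i) ∧
            (∀ j, ∑ i : Fin (L + 1), ((i : ℕ) + 1) * A i j = s)},
          ∏ i : Fin (L + 1), Nat.multinomial Finset.univ (A i) :=
  card_cutfree_equipartitions_general nw nc s L G k hk hcover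
end
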